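/- Suppose x' = A(t)x admits a strong exponential dichotomy with respect to a family of norms ‖·‖_t with constants D, λ, λ̄, where ‖x‖ ≤ ‖x‖_t ≤ Ce^{ε|t|}‖x‖, and let Y_∞ and the bounded invertible operator 𝔸 be as defined. Then every real number μ with e^{−λ} < |μ| < e^{λ} lies in the resolvent set of 𝔸; that is, μ·Id − 𝔸 is an invertible bounded operator on Y_∞. In particular, 𝔸 is hyperbolic in the sense that ±1 do not belong to its spectrum. -/

import Mathlib

/-!
Put `r = e^{-λ}`. For `r < |μ| < r⁻¹` the difference equation `μ x n - T(n, n-1) x (n-1) = y n`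
has the bounded solution
`x n = ∑_{k ≥ 0} μ^{-(k+1)} T(n, n-k) P(n-k) y(n-k) - ∑_{k ≥ 0} μ^k T(n, n+k+1) (I - P) y(n+k+1)`
(the Green function of the dichotomy): the dichotomy estimates make the two series converge
geometrically, with ratios `r / |μ|` and `r |μ|`, and both telescope. Conversely, a bounded `x`
with `μ x n = T(n, n-1) x (n-1)` is transported along the evolution by powers of `μ`, so
`‖P x n‖ ≤ D ‖x‖ (r / |μ|)^k` and `‖(I - P) x n‖ ≤ D ‖x‖ (r |μ|)^k` for every `k`, and `x = 0`.
Hence `μ - 𝔸` is injective with a bounded right inverse.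
-/

noncomputable section

/-- `ℝ^d` -/
abbrev Ed (d : ℕ) := Fin d → ℝ

/-- A family of norms on `ℝ^d` indexed by `ℤ`, each bounded below by the ambient norm
(so each seminorm is in fact a norm). -/
structure NormFamily (d : ℕ) where
  N : ℤ → Seminorm ℝ (Ed d)
  lower : ∀ (n : ℤ) (x : Ed d), ‖x‖ ≤ N n x

variable {d : ℕ}

/-- The submodule of two-sided sequences with bounded weighted norms. -/
def YinfSubmodule (𝒩 : NormFamily d) : Submodule ℝ (ℤ → Ed d) where
  carrier := {x | ∃ C : ℝ, ∀ n : ℤ, 𝒩.N n (x n) ≤ C}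
  add_mem' := by
    rintro x y ⟨Cx, hx⟩ ⟨Cy, hy⟩
    exact ⟨Cx + Cy, fun n => le_trans (map_add_le_add _ _ _) (add_le_add (hx n) (hy n))⟩
  zero_mem' := ⟨0, fun n => by simp⟩
  smul_mem' := by
    rintro c x ⟨Cx, hx⟩
    refine ⟨‖c‖ * Cx, fun n => ?_⟩
    rw [Pi.smul_apply, map_smul_eq_mul]
    exact mul_le_mul_of_nonneg_left (hx n) (norm_nonneg c)

/-- The Banach space `Y_∞` of sequences bounded with respect to the family of norms,
equipped with the norm `‖x‖ = sup_n ‖x_n‖_n`. -/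
def Yinf (𝒩 : NormFamily d) : Type := ↥(YinfSubmodule 𝒩)

instance (𝒩 : NormFamily d) : AddCommGroup (Yinf 𝒩) :=
  inferInstanceAs (AddCommGroup (YinfSubmodule 𝒩))

instance (𝒩 : NormFamily d) : Module ℝ (Yinf 𝒩) :=
  inferInstanceAs (Module ℝ (YinfSubmodule 𝒩))

namespace Yinf

variable {𝒩 : NormFamily d}

/-- The underlying sequence. -/
def seq (x : Yinf 𝒩) : ℤ → Ed d := x.1

lemma bddAbove (x : Yinf 𝒩) : BddAbove (Set.range fun n => 𝒩.N n (x.seq n)) := by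
  obtain ⟨C, hC⟩ := x.2
  exact ⟨C, by rintro _ ⟨n, rfl⟩; exact hC n⟩

@[simp] lemma seq_add (x y : Yinf 𝒩) (n : ℤ) : (x + y).seq n = x.seq n + y.seq n := rfl
@[simp] lemma seq_neg (x : Yinf 𝒩) (n : ℤ) : (-x).seq n = -(x.seq n) := rfl
@[simp] lemma seq_smul (c : ℝ) (x : Yinf 𝒩) (n : ℤ) : (c • x).seq n = c • (x.seq n) := rfl
@[simp] lemma seq_zero (n : ℤ) : (0 : Yinf 𝒩).seq n = 0 := rfl

instance : NormedAddCommGroup (Yinf 𝒩) :=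
  AddGroupNorm.toNormedAddCommGroup
    { toFun := fun x => ⨆ n : ℤ, 𝒩.N n (x.seq n)
      map_zero' := by simp
      add_le' := by
        intro x y
        refine ciSup_le fun n => ?_
        calc 𝒩.N n ((x + y).seq n) = 𝒩.N n (x.seq n + y.seq n) := by rw [seq_add]
          _ ≤ 𝒩.N n (x.seq n) + 𝒩.N n (y.seq n) := map_add_le_add _ _ _
          _ ≤ _ := add_le_add (le_ciSup x.bddAbove n) (le_ciSup y.bddAbove n)
      neg' := by
        intro x
        refine iSup_congr fun n => ?_
        rw [seq_neg, map_neg_eq_map]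
      eq_zero_of_map_eq_zero' := by
        intro x hx
        have h0 : ∀ n : ℤ, x.seq n = 0 := by
          intro n
          have h1 : 𝒩.N n (x.seq n) ≤ 0 := hx ▸ le_ciSup x.bddAbove n
          have h2 : ‖x.seq n‖ ≤ 0 := le_trans (𝒩.lower n _) h1
          exact norm_le_zero_iff.mp h2
        apply Subtype.ext
        funext n
        exact h0 n }

lemma norm_def (x : Yinf 𝒩) : ‖x‖ = ⨆ n : ℤ, 𝒩.N n (x.seq n) := rfl

instance : NormedSpace ℝ (Yinf 𝒩) where
  norm_smul_le c x := by
    rw [norm_def, norm_def]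
    rw [Real.mul_iSup_of_nonneg (norm_nonneg c)]
    refine ciSup_le fun n => ?_
    rw [seq_smul, map_smul_eq_mul]
    have hb : BddAbove (Set.range fun m : ℤ => ‖c‖ * 𝒩.N m (x.seq m)) := by
      obtain ⟨C, hC⟩ := x.bddAbove
      refine ⟨‖c‖ * C, ?_⟩
      rintro _ ⟨m, rfl⟩
      exact mul_le_mul_of_nonneg_left (hC ⟨m, rfl⟩) (norm_nonneg c)
    exact le_ciSup hb n

end Yinf

/-- A (possibly rescaled) evolution family `S` admits a strong exponential dichotomy
with respect to the family of norms `N t`. -/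
def SEDfam (d : ℕ) (S : ℝ → ℝ → Ed d → Ed d) (N : ℝ → Seminorm ℝ (Ed d)) : Prop :=
  ∃ (Q : ℝ → Ed d →L[ℝ] Ed d) (K lam lamBar : ℝ),
    0 < K ∧ 0 < lam ∧ lam ≤ lamBar ∧
    (∀ t, (Q t).comp (Q t) = Q t) ∧
    (∀ t s x, S t s (Q s x) = Q t (S t s x)) ∧
    (∀ t s x, s ≤ t → N t (S t s (Q s x)) ≤ K * Real.exp (-lam * (t - s)) * N s x) ∧
    (∀ t s x, t ≤ s → N t (S t s (x - Q s x)) ≤ K * Real.exp (-lam * (s - t)) * N s x) ∧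
    (∀ t s x, N t (S t s x) ≤ K * Real.exp (lamBar * |t - s|) * N s x)

open Filter Topology

theorem Seminorm.continuous_of_finiteDimensional {E : Type*} [NormedAddCommGroup E]
    [NormedSpace ℝ E] [FiniteDimensional ℝ E] (p : Seminorm ℝ E) : Continuous p :=
  continuousOn_univ.mp (p.convexOn.continuousOn isOpen_univ)

theorem nonpos_of_le_geometric {x c a : ℝ} (ha₀ : 0 ≤ a) (ha₁ : a < 1)
    (h : ∀ k : ℕ, x ≤ c * a ^ k) : x ≤ 0 :=
  ge_of_tendsto (by simpa using (tendsto_pow_atTop_nhds_zero_of_lt_one ha₀ ha₁).const_mul c)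
    (Eventually.of_forall h)

section GeometricSeries

variable {E : Type*} [NormedAddCommGroup E] [NormedSpace ℝ E] {p : Seminorm ℝ E}
  {f : ℕ → E} {c a : ℝ}

theorem summable_of_seminorm_le_geometric [CompleteSpace E] (hp : ∀ x, ‖x‖ ≤ p x)
    (ha₀ : 0 ≤ a) (ha₁ : a < 1) (hf : ∀ k, p (f k) ≤ c * a ^ k) : Summable f :=
  .of_norm_bounded ((summable_geometric_of_lt_one ha₀ ha₁).mul_left c)
    fun k => (hp _).trans (hf k)

theorem Seminorm.map_tsum_le_geometric [FiniteDimensional ℝ E] (hp : ∀ x, ‖x‖ ≤ p x)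
    (ha₀ : 0 ≤ a) (ha₁ : a < 1) (hf : ∀ k, p (f k) ≤ c * a ^ k) :
    p (∑' k, f k) ≤ c * (1 - a)⁻¹ := by
  have := FiniteDimensional.complete ℝ E
  have hg := (summable_geometric_of_lt_one ha₀ ha₁).mul_left c
  have hlim : Tendsto (fun s : Finset ℕ => p (∑ k ∈ s, f k)) atTop (𝓝 (p (∑' k, f k))) :=
    (p.continuous_of_finiteDimensional.tendsto _).comp
      (summable_of_seminorm_le_geometric hp ha₀ ha₁ hf).hasSum
  rw [← tsum_geometric_of_lt_one ha₀ ha₁, ← tsum_mul_left]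
  refine le_of_tendsto' hlim fun s => ?_
  calc p (∑ k ∈ s, f k) ≤ ∑ k ∈ s, p (f k) :=
        Finset.le_sum_of_subadditive p (map_zero p).le (map_add_le_add p) s f
    _ ≤ ∑ k ∈ s, c * a ^ k := Finset.sum_le_sum fun k _ => hf k
    _ ≤ ∑' k, c * a ^ k := hg.sum_le_tsum s fun k _ => (apply_nonneg p _).trans (hf k)

end GeometricSeries

theorem ContinuousLinearMap.isUnit_of_rightInverse_of_injective {R M : Type*} [Semiring R]
    [AddCommMonoid M] [Module R M] [TopologicalSpace M] {L G : M →L[R] M}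
    (hLG : ∀ x, L (G x) = x) (hL : Function.Injective L) : IsUnit L :=
  isUnit_iff_exists.mpr ⟨G, ext hLG, ext fun x => hL (hLG (L x))⟩

theorem NormFamily.eq_zero_of_le_geometric (𝒩 : NormFamily d) {n : ℤ} {x : Ed d} {c a : ℝ}
    (ha₀ : 0 ≤ a) (ha₁ : a < 1) (h : ∀ k : ℕ, 𝒩.N n x ≤ c * a ^ k) : x = 0 :=
  norm_le_zero_iff.mp ((𝒩.lower n x).trans (nonpos_of_le_geometric ha₀ ha₁ h))

namespace Yinf

variable {𝒩 : NormFamily d}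

theorem seminorm_seq_le_norm (x : Yinf 𝒩) (n : ℤ) : 𝒩.N n (x.seq n) ≤ ‖x‖ :=
  le_ciSup x.bddAbove n

theorem ext {x y : Yinf 𝒩} (h : ∀ n, x.seq n = y.seq n) : x = y :=
  Subtype.ext (funext h)

def mkCLM (f : Yinf 𝒩 → ℤ → Ed d) (hadd : ∀ x y, f (x + y) = f x + f y)
    (hsmul : ∀ (c : ℝ) x, f (c • x) = c • f x) (K : ℝ)
    (hK : ∀ x n, 𝒩.N n (f x n) ≤ K * ‖x‖) : Yinf 𝒩 →L[ℝ] Yinf 𝒩 :=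
  LinearMap.mkContinuous
    { toFun x := (⟨f x, K * ‖x‖, hK x⟩ : YinfSubmodule 𝒩)
      map_add' x y := ext fun n => congrFun (hadd x y) n
      map_smul' c x := ext fun n => congrFun (hsmul c x) n }
    K fun x => ciSup_le (hK x)

@[simp] theorem mkCLM_seq (f : Yinf 𝒩 → ℤ → Ed d) hadd hsmul K hK (x : Yinf 𝒩) :
    (mkCLM f hadd hsmul K hK x).seq = f x := rfl

end Yinf

/-- An exponential dichotomy at integer times, with the contraction rate `r` in place of
`e^{-λ}`. -/
structure DiscreteDichotomy (𝒩 : NormFamily d) (T : ℤ → ℤ → Ed d →L[ℝ] Ed d)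
    (P : ℤ → Ed d →L[ℝ] Ed d) (D r : ℝ) : Prop where
  self_eq_id : ∀ n, T n n = ContinuousLinearMap.id ℝ (Ed d)
  comp_eq : ∀ l m n, (T l m).comp (T m n) = T l n
  comp_proj : ∀ m n, (T m n).comp (P n) = (P m).comp (T m n)
  const_nonneg : 0 ≤ D
  rate_nonneg : 0 ≤ r
  stable : ∀ n (k : ℕ) x, 𝒩.N (n + k) (T (n + k) n (P n x)) ≤ D * r ^ k * 𝒩.N n x
  unstable : ∀ n (k : ℕ) x, 𝒩.N n (T n (n + k) (x - P (n + k) x)) ≤ D * r ^ k * 𝒩.N (n + k) x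

namespace DiscreteDichotomy

def stableTerm (T : ℤ → ℤ → Ed d →L[ℝ] Ed d) (P : ℤ → Ed d →L[ℝ] Ed d) (y : ℤ → Ed d)
    (n : ℤ) (k : ℕ) : Ed d :=
  T n (n - k) (P (n - k) (y (n - k)))

def unstableTerm (T : ℤ → ℤ → Ed d →L[ℝ] Ed d) (P : ℤ → Ed d →L[ℝ] Ed d) (y : ℤ → Ed d)
    (n : ℤ) (k : ℕ) : Ed d :=
  T n (n + ↑(k + 1)) (y (n + ↑(k + 1)) - P (n + ↑(k + 1)) (y (n + ↑(k + 1))))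

def stableSum (T : ℤ → ℤ → Ed d →L[ℝ] Ed d) (P : ℤ → Ed d →L[ℝ] Ed d) (μ : ℝ)
    (y : ℤ → Ed d) (n : ℤ) : Ed d :=
  ∑' k : ℕ, (μ⁻¹) ^ (k + 1) • stableTerm T P y n k

def unstableSum (T : ℤ → ℤ → Ed d →L[ℝ] Ed d) (P : ℤ → Ed d →L[ℝ] Ed d) (μ : ℝ)
    (y : ℤ → Ed d) (n : ℤ) : Ed d :=
  ∑' k : ℕ, μ ^ k • unstableTerm T P y n k

def greenSeq (T : ℤ → ℤ → Ed d →L[ℝ] Ed d) (P : ℤ → Ed d →L[ℝ] Ed d) (μ : ℝ)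
    (y : ℤ → Ed d) (n : ℤ) : Ed d :=
  stableSum T P μ y n - unstableSum T P μ y n

variable {𝒩 : NormFamily d} {T : ℤ → ℤ → Ed d →L[ℝ] Ed d} {P : ℤ → Ed d →L[ℝ] Ed d}
  {D r μ : ℝ} (h : DiscreteDichotomy 𝒩 T P D r)

theorem greenSeq_smul (c : ℝ) (y : Yinf 𝒩) :
    greenSeq T P μ (c • y).seq = c • greenSeq T P μ y.seq := by
  funext n
  simp only [greenSeq, stableSum, unstableSum, Pi.smul_apply, smul_sub, ← tsum_const_smul'']
  simp only [stableTerm, unstableTerm, Yinf.seq_smul, ← smul_sub, map_smul, smul_comm c]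

include h

theorem apply_apply (l m n : ℤ) (x : Ed d) : T l m (T m n x) = T l n x :=
  DFunLike.congr_fun (h.comp_eq l m n) x

theorem apply_proj (m n : ℤ) (x : Ed d) : T m n (P n x) = P m (T m n x) :=
  DFunLike.congr_fun (h.comp_proj m n) x

theorem apply_sub_proj (m n : ℤ) (x : Ed d) :
    T m n (x - P n x) = T m n x - P m (T m n x) := by
  rw [map_sub, h.apply_proj]

theorem stableTerm_le (y : Yinf 𝒩) (n : ℤ) (k : ℕ) :
    𝒩.N n (stableTerm T P y.seq n k) ≤ D * r ^ k * ‖y‖ := by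
  have hDr : 0 ≤ D * r ^ k := mul_nonneg h.const_nonneg (pow_nonneg h.rate_nonneg k)
  have := h.stable (n - k) k (y.seq (n - k))
  rw [sub_add_cancel] at this
  exact this.trans (mul_le_mul_of_nonneg_left (y.seminorm_seq_le_norm _) hDr)

theorem unstableTerm_le (y : Yinf 𝒩) (n : ℤ) (k : ℕ) :
    𝒩.N n (unstableTerm T P y.seq n k) ≤ D * r ^ (k + 1) * ‖y‖ := by
  have hDr : 0 ≤ D * r ^ (k + 1) := mul_nonneg h.const_nonneg (pow_nonneg h.rate_nonneg _)
  exact (h.unstable n (k + 1) _).trans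
    (mul_le_mul_of_nonneg_left (y.seminorm_seq_le_norm _) hDr)

theorem stableTerm_zero (y : ℤ → Ed d) (n : ℤ) : stableTerm T P y n 0 = P n (y n) := by
  simp [stableTerm, h.self_eq_id]

theorem apply_stableTerm (y : ℤ → Ed d) (n : ℤ) (k : ℕ) :
    T n (n - 1) (stableTerm T P y (n - 1) k) = stableTerm T P y n (k + 1) := by
  have hidx : n - 1 - (k : ℤ) = n - ↑(k + 1) := by push_cast; ring
  rw [stableTerm, stableTerm, hidx, h.apply_apply]

theorem apply_unstableTerm_zero (y : ℤ → Ed d) (n : ℤ) :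
    T n (n - 1) (unstableTerm T P y (n - 1) 0) = y n - P n (y n) := by
  have hidx : n - 1 + ((0 + 1 : ℕ) : ℤ) = n := by push_cast; ring
  rw [unstableTerm, hidx, h.apply_apply, h.self_eq_id]
  rfl

theorem apply_unstableTerm (y : ℤ → Ed d) (n : ℤ) (k : ℕ) :
    T n (n - 1) (unstableTerm T P y (n - 1) (k + 1)) = unstableTerm T P y n k := by
  have hidx : n - 1 + ↑(k + 1 + 1) = n + ↑(k + 1) := by push_cast; ring
  rw [unstableTerm, unstableTerm, hidx, h.apply_apply]

theorem abs_pos_of_rate_lt (hμ : r < |μ|) : 0 < |μ| := h.rate_nonneg.trans_lt hμ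

theorem stable_ratio_lt_one (hμ : r < |μ|) : r * |μ|⁻¹ < 1 := by
  rw [← div_eq_mul_inv, div_lt_one (h.abs_pos_of_rate_lt hμ)]
  exact hμ

theorem stableSum_term_le (y : Yinf 𝒩) (n : ℤ) (k : ℕ) :
    𝒩.N n ((μ⁻¹) ^ (k + 1) • stableTerm T P y.seq n k) ≤
      D * ‖y‖ * |μ|⁻¹ * (r * |μ|⁻¹) ^ k := by
  rw [map_smul_eq_mul, norm_pow, norm_inv, Real.norm_eq_abs]
  calc |μ|⁻¹ ^ (k + 1) * 𝒩.N n (stableTerm T P y.seq n k)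
      ≤ |μ|⁻¹ ^ (k + 1) * (D * r ^ k * ‖y‖) := by
        gcongr
        exact h.stableTerm_le y n k
    _ = D * ‖y‖ * |μ|⁻¹ * (r * |μ|⁻¹) ^ k := by ring

theorem unstableSum_term_le (y : Yinf 𝒩) (n : ℤ) (k : ℕ) :
    𝒩.N n (μ ^ k • unstableTerm T P y.seq n k) ≤ D * ‖y‖ * r * (|μ| * r) ^ k := by
  rw [map_smul_eq_mul, norm_pow, Real.norm_eq_abs]
  calc |μ| ^ k * 𝒩.N n (unstableTerm T P y.seq n k)
      ≤ |μ| ^ k * (D * r ^ (k + 1) * ‖y‖) := by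
        gcongr
        exact h.unstableTerm_le y n k
    _ = D * ‖y‖ * r * (|μ| * r) ^ k := by ring

theorem summable_stableSum (hμ : r < |μ|) (y : Yinf 𝒩) (n : ℤ) :
    Summable fun k : ℕ => (μ⁻¹) ^ (k + 1) • stableTerm T P y.seq n k :=
  summable_of_seminorm_le_geometric (𝒩.lower n) (by have := h.rate_nonneg; positivity)
    (h.stable_ratio_lt_one hμ) (h.stableSum_term_le y n)

theorem summable_unstableSum (hμ : |μ| * r < 1) (y : Yinf 𝒩) (n : ℤ) :
    Summable fun k : ℕ => μ ^ k • unstableTerm T P y.seq n k :=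
  summable_of_seminorm_le_geometric (𝒩.lower n) (by have := h.rate_nonneg; positivity) hμ
    (h.unstableSum_term_le y n)

theorem smul_stableSum_sub (hμ : r < |μ|) (y : Yinf 𝒩) (n : ℤ) :
    μ • stableSum T P μ y.seq n - T n (n - 1) (stableSum T P μ y.seq (n - 1)) =
      P n (y.seq n) := by
  have hμ₀ : μ ≠ 0 := abs_pos.mp (h.abs_pos_of_rate_lt hμ)
  set t : ℕ → Ed d := fun k => (μ⁻¹) ^ k • stableTerm T P y.seq n k
  have hμt : (fun k => μ • ((μ⁻¹) ^ (k + 1) • stableTerm T P y.seq n k)) = t := by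
    funext k
    rw [smul_smul, pow_succ', ← mul_assoc, mul_inv_cancel₀ hμ₀, one_mul]
  have ht : Summable t := hμt ▸ (h.summable_stableSum hμ y n).const_smul μ
  have hshift : T n (n - 1) (stableSum T P μ y.seq (n - 1)) = ∑' k, t (k + 1) := by
    rw [stableSum, (T n (n - 1)).map_tsum (h.summable_stableSum hμ y (n - 1))]
    simp only [map_smul, h.apply_stableTerm, t]
  rw [stableSum, ← tsum_const_smul'', hμt, hshift, ht.tsum_eq_zero_add]
  simp [t, h.stableTerm_zero]

theorem smul_unstableSum_sub (hμ : |μ| * r < 1) (y : Yinf 𝒩) (n : ℤ) :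
    μ • unstableSum T P μ y.seq n - T n (n - 1) (unstableSum T P μ y.seq (n - 1)) =
      -(y.seq n - P n (y.seq n)) := by
  set v : ℕ → Ed d := fun k => μ ^ k • T n (n - 1) (unstableTerm T P y.seq (n - 1) k)
  have hv : Summable v := by
    simpa only [map_smul] using (T n (n - 1)).summable (h.summable_unstableSum hμ y (n - 1))
  have hshift : T n (n - 1) (unstableSum T P μ y.seq (n - 1)) = ∑' k, v k := by
    rw [unstableSum, (T n (n - 1)).map_tsum (h.summable_unstableSum hμ y (n - 1))]
    simp only [map_smul, v]
  have hμv : (fun k => μ • (μ ^ k • unstableTerm T P y.seq n k)) = fun k => v (k + 1) := by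
    funext k
    simp only [v, h.apply_unstableTerm, smul_smul, pow_succ']
  rw [unstableSum, ← tsum_const_smul'', hμv, hshift, hv.tsum_eq_zero_add]
  simp [v, h.apply_unstableTerm_zero]

theorem greenSeq_add (hμ₁ : r < |μ|) (hμ₂ : |μ| * r < 1) (x y : Yinf 𝒩) :
    greenSeq T P μ (x + y).seq = greenSeq T P μ x.seq + greenSeq T P μ y.seq := by
  funext n
  have hs (k : ℕ) : stableTerm T P (x + y).seq n k =
      stableTerm T P x.seq n k + stableTerm T P y.seq n k := by
    simp only [stableTerm, Yinf.seq_add, map_add]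
  have hu (k : ℕ) : unstableTerm T P (x + y).seq n k =
      unstableTerm T P x.seq n k + unstableTerm T P y.seq n k := by
    simp only [unstableTerm, Yinf.seq_add, map_add, add_sub_add_comm]
  simp only [greenSeq, stableSum, unstableSum, Pi.add_apply, hs, hu, smul_add]
  rw [(h.summable_stableSum hμ₁ x n).tsum_add (h.summable_stableSum hμ₁ y n),
    (h.summable_unstableSum hμ₂ x n).tsum_add (h.summable_unstableSum hμ₂ y n)]
  abel

theorem greenSeq_le (hμ₁ : r < |μ|) (hμ₂ : |μ| * r < 1) (y : Yinf 𝒩) (n : ℤ) :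
    𝒩.N n (greenSeq T P μ y.seq n) ≤
      (D * |μ|⁻¹ * (1 - r * |μ|⁻¹)⁻¹ + D * r * (1 - |μ| * r)⁻¹) * ‖y‖ := by
  have hr := h.rate_nonneg
  have hs := Seminorm.map_tsum_le_geometric (𝒩.lower n) (by positivity)
    (h.stable_ratio_lt_one hμ₁) (h.stableSum_term_le (μ := μ) y n)
  have hu := Seminorm.map_tsum_le_geometric (𝒩.lower n) (by positivity) hμ₂
    (h.unstableSum_term_le y n)
  calc 𝒩.N n (greenSeq T P μ y.seq n)
      ≤ 𝒩.N n (stableSum T P μ y.seq n) + 𝒩.N n (unstableSum T P μ y.seq n) :=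
        map_sub_le_add _ _ _
    _ ≤ D * ‖y‖ * |μ|⁻¹ * (1 - r * |μ|⁻¹)⁻¹ + D * ‖y‖ * r * (1 - |μ| * r)⁻¹ :=
        add_le_add hs hu
    _ = (D * |μ|⁻¹ * (1 - r * |μ|⁻¹)⁻¹ + D * r * (1 - |μ| * r)⁻¹) * ‖y‖ := by ring

def green (hμ₁ : r < |μ|) (hμ₂ : |μ| * r < 1) : Yinf 𝒩 →L[ℝ] Yinf 𝒩 :=
  Yinf.mkCLM (fun y => greenSeq T P μ y.seq) (h.greenSeq_add hμ₁ hμ₂) greenSeq_smul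
    _ (h.greenSeq_le hμ₁ hμ₂)

theorem apply_sub_natCast_of_apply_eq_smul {y : ℤ → Ed d}
    (hy : ∀ n, T n (n - 1) (y (n - 1)) = μ • y n) (k : ℕ) (n : ℤ) :
    T n (n - k) (y (n - k)) = μ ^ k • y n := by
  induction k generalizing n with
  | zero => simp [h.self_eq_id]
  | succ k ih =>
    have hidx : n - ↑(k + 1) = n - 1 - k := by push_cast; ring
    rw [hidx, ← h.apply_apply n (n - 1), ih, map_smul, hy, smul_smul, pow_succ]

theorem proj_eq_zero_of_apply_eq_smul (hμ : r < |μ|) {y : Yinf 𝒩}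
    (hy : ∀ n, T n (n - 1) (y.seq (n - 1)) = μ • y.seq n) (n : ℤ) : P n (y.seq n) = 0 := by
  have hμ₀ := h.abs_pos_of_rate_lt hμ
  refine 𝒩.eq_zero_of_le_geometric (n := n) (c := D * ‖y‖) (by have := h.rate_nonneg; positivity)
    (h.stable_ratio_lt_one hμ) fun k => ?_
  have hterm : stableTerm T P y.seq n k = μ ^ k • P n (y.seq n) := by
    rw [stableTerm, h.apply_proj, h.apply_sub_natCast_of_apply_eq_smul hy, map_smul]
  have hle := h.stableTerm_le y n k
  rw [hterm, map_smul_eq_mul, norm_pow, Real.norm_eq_abs] at hle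
  calc 𝒩.N n (P n (y.seq n)) = (|μ| ^ k)⁻¹ * (|μ| ^ k * 𝒩.N n (P n (y.seq n))) := by
        field_simp
    _ ≤ (|μ| ^ k)⁻¹ * (D * r ^ k * ‖y‖) := by gcongr
    _ = D * ‖y‖ * (r * |μ|⁻¹) ^ k := by ring

theorem sub_proj_eq_zero_of_apply_eq_smul (hμ : |μ| * r < 1) {y : Yinf 𝒩}
    (hy : ∀ n, T n (n - 1) (y.seq (n - 1)) = μ • y.seq n) (n : ℤ) :
    y.seq n - P n (y.seq n) = 0 := by
  refine 𝒩.eq_zero_of_le_geometric (n := n) (c := D * ‖y‖ * (|μ| * r))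
    (by have := h.rate_nonneg; positivity) hμ fun k => ?_
  have hforward : T (n + ↑(k + 1)) n (y.seq n) = μ ^ (k + 1) • y.seq (n + ↑(k + 1)) := by
    simpa using h.apply_sub_natCast_of_apply_eq_smul hy (k + 1) (n + ↑(k + 1))
  have hterm : y.seq n - P n (y.seq n) = μ ^ (k + 1) • unstableTerm T P y.seq n k := by
    rw [unstableTerm, ← map_smul, smul_sub, ← map_smul, ← hforward, ← h.apply_sub_proj,
      h.apply_apply, h.self_eq_id]
    rfl
  rw [hterm, map_smul_eq_mul, norm_pow, Real.norm_eq_abs]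
  calc |μ| ^ (k + 1) * 𝒩.N n (unstableTerm T P y.seq n k)
      ≤ |μ| ^ (k + 1) * (D * r ^ (k + 1) * ‖y‖) := by
        gcongr
        exact h.unstableTerm_le y n k
    _ = D * ‖y‖ * (|μ| * r) * (|μ| * r) ^ k := by ring

theorem eq_zero_of_apply_eq_smul (hμ₁ : r < |μ|) (hμ₂ : |μ| * r < 1) {y : Yinf 𝒩}
    (hy : ∀ n, T n (n - 1) (y.seq (n - 1)) = μ • y.seq n) : y = 0 :=
  Yinf.ext fun n => by
    rw [Yinf.seq_zero, ← sub_add_cancel (y.seq n) (P n (y.seq n)),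
      h.sub_proj_eq_zero_of_apply_eq_smul hμ₂ hy, h.proj_eq_zero_of_apply_eq_smul hμ₁ hy, add_zero]

theorem isUnit_algebraMap_sub (hμ₁ : r < |μ|) (hμ₂ : |μ| * r < 1)
    {𝔸 : Yinf 𝒩 →L[ℝ] Yinf 𝒩} (h𝔸 : ∀ x n, (𝔸 x).seq n = T n (n - 1) (x.seq (n - 1))) :
    IsUnit (algebraMap ℝ (Yinf 𝒩 →L[ℝ] Yinf 𝒩) μ - 𝔸) := by
  set L := algebraMap ℝ (Yinf 𝒩 →L[ℝ] Yinf 𝒩) μ - 𝔸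
  have hL (x : Yinf 𝒩) (n : ℤ) : (L x).seq n = μ • x.seq n - T n (n - 1) (x.seq (n - 1)) := by
    rw [← h𝔸]
    rfl
  refine ContinuousLinearMap.isUnit_of_rightInverse_of_injective (G := h.green hμ₁ hμ₂)
    (fun y => Yinf.ext fun n => ?_) ((injective_iff_map_eq_zero L).mpr fun y hy => ?_)
  · simp only [hL, green, Yinf.mkCLM_seq, greenSeq, smul_sub, map_sub]
    rw [sub_sub_sub_comm, h.smul_stableSum_sub hμ₁, h.smul_unstableSum_sub hμ₂]
    abel
  · refine h.eq_zero_of_apply_eq_smul hμ₁ hμ₂ fun n => ?_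
    have := hL y n
    rw [hy, Yinf.seq_zero] at this
    exact (sub_eq_zero.mp this.symm).symm

end DiscreteDichotomy

theorem Real.exp_neg_mul_intCast_add_sub (lam : ℝ) (n : ℤ) (k : ℕ) :
    Real.exp (-lam * (((n + k : ℤ) : ℝ) - n)) = Real.exp (-lam) ^ k := by
  rw [← Real.exp_nat_mul]
  push_cast
  ring_nf

theorem DiscreteDichotomy.of_continuousTime {𝒩 : NormFamily d} {N : ℝ → Seminorm ℝ (Ed d)}
    (h𝒩 : ∀ n : ℤ, 𝒩.N n = N n) {T : ℝ → ℝ → Ed d →L[ℝ] Ed d} {P : ℝ → Ed d →L[ℝ] Ed d}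
    {D lam : ℝ} (hT_id : ∀ t, T t t = ContinuousLinearMap.id ℝ (Ed d))
    (hT_comp : ∀ t s r, (T t s).comp (T s r) = T t r)
    (hP_comm : ∀ t s, (T t s).comp (P s) = (P t).comp (T t s)) (hD : 0 ≤ D)
    (hs : ∀ (t s : ℝ) (x : Ed d), s ≤ t →
      N t (T t s (P s x)) ≤ D * Real.exp (-lam * (t - s)) * N s x)
    (hu : ∀ (t s : ℝ) (x : Ed d), t ≤ s →
      N t (T t s (x - P s x)) ≤ D * Real.exp (-lam * (s - t)) * N s x) :
    DiscreteDichotomy 𝒩 (fun m n : ℤ => T m n) (fun n : ℤ => P n) D (Real.exp (-lam)) where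
  self_eq_id n := hT_id n
  comp_eq l m n := hT_comp l m n
  comp_proj m n := hP_comm m n
  const_nonneg := hD
  rate_nonneg := (Real.exp_pos _).le
  stable n k x := by
    simpa only [h𝒩, Real.exp_neg_mul_intCast_add_sub] using hs (n + k : ℤ) n x (by simp)
  unstable n k x := by
    simpa only [h𝒩, Real.exp_neg_mul_intCast_add_sub] using hu n (n + k : ℤ) x (by simp)

theorem annulus_around_unit_circle_in_resolvent_set_general (d : ℕ)
    -- the linear equation x' = A(t) x and its evolution family T(t,s)
    (T : ℝ → ℝ → Ed d →L[ℝ] Ed d)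
    (hT_id : ∀ t, T t t = ContinuousLinearMap.id ℝ (Ed d))
    (hT_comp : ∀ t s r, (T t s).comp (T s r) = T t r)
    -- the family of norms ‖·‖_t = N t with its comparison constants
    (N : ℝ → Seminorm ℝ (Ed d))
    -- x' = A(t)x admits a strong exponential dichotomy w.r.t. the norms ‖·‖_t,
    -- with projections P(t) and constants D, λ, λ̄
    (P : ℝ → Ed d →L[ℝ] Ed d) (D lam : ℝ)
    (hD : 0 < D) (hlam : 0 < lam)
    (hP_comm : ∀ t s, (T t s).comp (P s) = (P t).comp (T t s))
    (hs : ∀ (t s : ℝ) (x : Ed d), s ≤ t →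
      N t (T t s (P s x)) ≤ D * Real.exp (-lam * (t - s)) * N s x)
    (hu : ∀ (t s : ℝ) (x : Ed d), t ≤ s →
      N t (T t s (x - P s x)) ≤ D * Real.exp (-lam * (s - t)) * N s x)
    -- the norms at integer times, and the Banach space Y_∞
    (𝒩 : NormFamily d) (h𝒩 : ∀ n : ℤ, 𝒩.N n = N (n : ℝ))
    -- the bounded invertible operator 𝔸 on Y_∞, (𝔸 x)_n = A_{n-1} x_{n-1} = T(n,n-1) x_{n-1}
    (𝔸 : Yinf 𝒩 →L[ℝ] Yinf 𝒩)
    (h𝔸 : ∀ (x : Yinf 𝒩) (n : ℤ),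
      (𝔸 x).seq n = T (n : ℝ) ((n - 1 : ℤ) : ℝ) (x.seq (n - 1)))
    :
    -- every μ with e^{-λ} < |μ| < e^{λ} is in the resolvent set of 𝔸,
    -- i.e. μ·Id − 𝔸 is an invertible bounded operator on Y_∞
    (∀ μ : ℝ, Real.exp (-lam) < |μ| → |μ| < Real.exp lam →
      μ ∉ spectrum ℝ 𝔸 ∧ IsUnit (algebraMap ℝ (Yinf 𝒩 →L[ℝ] Yinf 𝒩) μ - 𝔸)) ∧
    -- in particular 𝔸 is hyperbolic: ±1 do not belong to its spectrum
    (1 : ℝ) ∉ spectrum ℝ 𝔸 ∧ (-1 : ℝ) ∉ spectrum ℝ 𝔸 := by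
  have hdich := DiscreteDichotomy.of_continuousTime h𝒩 hT_id hT_comp hP_comm hD.le hs hu
  have hunit (μ : ℝ) (h₁ : Real.exp (-lam) < |μ|) (h₂ : |μ| < Real.exp lam) :
      IsUnit (algebraMap ℝ (Yinf 𝒩 →L[ℝ] Yinf 𝒩) μ - 𝔸) := by
    refine hdich.isUnit_algebraMap_sub h₁ ?_ h𝔸
    rwa [Real.exp_neg, ← div_eq_mul_inv, div_lt_one (Real.exp_pos lam)]
  have hone : Real.exp (-lam) < 1 ∧ 1 < Real.exp lam :=
    ⟨Real.exp_lt_one_iff.mpr (neg_neg_of_pos hlam), Real.one_lt_exp_iff.mpr hlam⟩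
  refine ⟨fun μ h₁ h₂ => ⟨spectrum.notMem_iff.mpr (hunit μ h₁ h₂), hunit μ h₁ h₂⟩, ?_, ?_⟩
  · exact spectrum.notMem_iff.mpr (hunit 1 (by simpa using hone.1) (by simpa using hone.2))
  · exact spectrum.notMem_iff.mpr (hunit (-1) (by simpa using hone.1) (by simpa using hone.2))

theorem annulus_around_unit_circle_in_resolvent_set (d : ℕ)
    -- the linear equation x' = A(t) x and its evolution family T(t,s)
    (A : ℝ → Ed d →L[ℝ] Ed d) (T : ℝ → ℝ → Ed d →L[ℝ] Ed d)
    (hT_id : ∀ t, T t t = ContinuousLinearMap.id ℝ (Ed d))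
    (hT_comp : ∀ t s r, (T t s).comp (T s r) = T t r)
    (hT_deriv : ∀ s x t, HasDerivAt (fun τ => T τ s x) (A t (T t s x)) t)
    -- the family of norms ‖·‖_t = N t with its comparison constants
    (N : ℝ → Seminorm ℝ (Ed d)) (C eps : ℝ) (hC : 0 < C) (heps : 0 ≤ eps)
    (hlowN : ∀ (t : ℝ) (x : Ed d), ‖x‖ ≤ N t x)
    (hupN : ∀ (t : ℝ) (x : Ed d), N t x ≤ C * Real.exp (eps * |t|) * ‖x‖)
    -- x' = A(t)x admits a strong exponential dichotomy w.r.t. the norms ‖·‖_t,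
    -- with projections P(t) and constants D, λ, λ̄
    (P : ℝ → Ed d →L[ℝ] Ed d) (D lam lamBar : ℝ)
    (hD : 0 < D) (hlam : 0 < lam) (hll : lam ≤ lamBar)
    (hP_proj : ∀ t, (P t).comp (P t) = P t)
    (hP_comm : ∀ t s, (T t s).comp (P s) = (P t).comp (T t s))
    (hs : ∀ (t s : ℝ) (x : Ed d), s ≤ t →
      N t (T t s (P s x)) ≤ D * Real.exp (-lam * (t - s)) * N s x)
    (hu : ∀ (t s : ℝ) (x : Ed d), t ≤ s →
      N t (T t s (x - P s x)) ≤ D * Real.exp (-lam * (s - t)) * N s x)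
    (hg : ∀ (t s : ℝ) (x : Ed d),
      N t (T t s x) ≤ D * Real.exp (lamBar * |t - s|) * N s x)
    -- the norms at integer times, and the Banach space Y_∞
    (𝒩 : NormFamily d) (h𝒩 : ∀ n : ℤ, 𝒩.N n = N (n : ℝ))
    -- the bounded invertible operator 𝔸 on Y_∞, (𝔸 x)_n = A_{n-1} x_{n-1} = T(n,n-1) x_{n-1}
    (𝔸 : Yinf 𝒩 →L[ℝ] Yinf 𝒩) (h𝔸inv : IsUnit 𝔸)
    (h𝔸 : ∀ (x : Yinf 𝒩) (n : ℤ),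
      (𝔸 x).seq n = T (n : ℝ) ((n - 1 : ℤ) : ℝ) (x.seq (n - 1)))
    :
    -- every μ with e^{-λ} < |μ| < e^{λ} is in the resolvent set of 𝔸,
    -- i.e. μ·Id − 𝔸 is an invertible bounded operator on Y_∞
    (∀ μ : ℝ, Real.exp (-lam) < |μ| → |μ| < Real.exp lam →
      μ ∉ spectrum ℝ 𝔸 ∧ IsUnit (algebraMap ℝ (Yinf 𝒩 →L[ℝ] Yinf 𝒩) μ - 𝔸)) ∧
    -- in particular 𝔸 is hyperbolic: ±1 do not belong to its spectrum
    (1 : ℝ) ∉ spectrum ℝ 𝔸 ∧ (-1 : ℝ) ∉ spectrum ℝ 𝔸 :=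
  annulus_around_unit_circle_in_resolvent_set_general d T hT_id hT_comp N P D lam hD hlam hP_comm hs
    hu 𝒩 h𝒩 𝔸 h𝔸

end
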